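/- A priori guaranteed lower eigenvalue bound (Corollary 3.5, abstract form): Assume conditions (A), (B) and (C) hold with constants α > 0 and β > 0 satisfying α + β·λ(j) ≤ 1, and let λ_h ≥ 0 be a j-th discrete min-max bound. Then λ_h ≤ λ(j). -/
import Mathlib


/-- A priori guaranteed lower eigenvalue bound (Corollary 3.5, abstract form):
Assume conditions (A), (B) and (C) hold with constants `α > 0` and `β > 0` satisfying
`α + β·λ(j) ≤ 1`, and let `λ_h ≥ 0` be a `j`-th discrete min-max bound. Then
`λ_h ≤ λ(j)`. -/
theorem a_priori_lower_eigenvalue_bound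
    {V : Type*} [AddCommGroup V] [Module ℝ V]
    {Vh : Type*} [AddCommGroup Vh] [Module ℝ Vh] [FiniteDimensional ℝ Vh]
    (a b : V →ₗ[ℝ] V →ₗ[ℝ] ℝ)
    (ha_symm : ∀ x y, a x y = a y x) (hb_symm : ∀ x y, b x y = b y x)
    (ah sh bh : Vh →ₗ[ℝ] Vh →ₗ[ℝ] ℝ)
    (hah_symm : ∀ x y, ah x y = ah y x) (hsh_symm : ∀ x y, sh x y = sh y x)
    (hbh_symm : ∀ x y, bh x y = bh y x)
    (hah_pos : ∀ x, 0 ≤ ah x x) (hsh_pos : ∀ x, 0 ≤ sh x x) (hbh_pos : ∀ x, 0 ≤ bh x x)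
    (Ih : V →ₗ[ℝ] Vh)
    (D : V → ℝ) (hD : ∀ v, 0 ≤ D v)
    (j : ℕ) (hj : 1 ≤ j)
    (u : Fin j → V) (lam : Fin j → ℝ) (hlam : Monotone lam)
    (hnorm : ∀ i, b (u i) (u i) = 1)
    (heig : ∀ i, a (u i) (u i) = lam i)
    (horth_a : ∀ i k, i ≠ k → a (u i) (u k) = 0)
    (horth_b : ∀ i k, i ≠ k → b (u i) (u k) = 0)
    (α β : ℝ) (hα : 0 < α) (hβ : 0 < β)
    (hA : ∀ v ∈ Submodule.span ℝ (Set.range u),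
      ah (Ih v) (Ih v) ≤ a v v - (D v) ^ 2)
    (hB : ∀ v ∈ Submodule.span ℝ (Set.range u),
      sh (Ih v) (Ih v) ≤ α * (D v) ^ 2)
    (hC : ∀ v ∈ Submodule.span ℝ (Set.range u),
      b v v - β * (D v) ^ 2 ≤ bh (Ih v) (Ih v))
    (h_apriori : α + β * lam ⟨j - 1, by omega⟩ ≤ 1)
    (lamh : ℝ) (hlamh : 0 ≤ lamh)
    (hminmax : ∀ Wh : Submodule ℝ Vh, Module.finrank ℝ Wh = j →
      ∃ wh ∈ Wh, wh ≠ 0 ∧ lamh * bh wh wh ≤ ah wh wh + sh wh wh) :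
    lamh ≤ lam ⟨j - 1, by omega⟩ := by
  have hm : j - 1 < j := by omega
  set idx : Fin j := ⟨j - 1, hm⟩ with hidx
  have h_apriori' : α + β * lam idx ≤ 1 := h_apriori
  show lamh ≤ lam idx
  -- the linear map sending coefficients to the corresponding combination of the u i
  let S : (Fin j → ℝ) →ₗ[ℝ] V :=
    { toFun := fun c => ∑ i, c i • u i
      map_add' := by intro x y; simp [add_smul, Finset.sum_add_distrib]
      map_smul' := by intro r x; simp [smul_smul, Finset.smul_sum] }
  have hS : ∀ c : Fin j → ℝ, S c = ∑ i, c i • u i := fun c => rfl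
  have hmem : ∀ c : Fin j → ℝ, S c ∈ Submodule.span ℝ (Set.range u) := by
    intro c
    rw [hS]
    exact Submodule.sum_mem _ fun i _ =>
      Submodule.smul_mem _ _ (Submodule.subset_span (Set.mem_range_self i))
  have expand : ∀ (f : V →ₗ[ℝ] V →ₗ[ℝ] ℝ) (c : Fin j → ℝ),
      f (S c) (S c) = ∑ i, ∑ k, c i * c k * f (u i) (u k) := by
    intro f c
    simp only [hS, map_sum, LinearMap.sum_apply, map_smul, LinearMap.smul_apply,
      smul_eq_mul]
    rw [Finset.sum_comm]
    refine Finset.sum_congr rfl fun i _ => ?_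
    rw [Finset.mul_sum]
    exact Finset.sum_congr rfl fun k _ => by ring
  have hb_val : ∀ c : Fin j → ℝ, b (S c) (S c) = ∑ i, (c i) ^ 2 := by
    intro c
    rw [expand]
    refine Finset.sum_congr rfl fun i _ => ?_
    rw [Finset.sum_eq_single i]
    · rw [hnorm i]; ring
    · intro k _ hk; rw [horth_b i k (Ne.symm hk)]; ring
    · intro h; exact absurd (Finset.mem_univ i) h
  have ha_val : ∀ c : Fin j → ℝ, a (S c) (S c) = ∑ i, lam i * (c i) ^ 2 := by
    intro c
    rw [expand]
    refine Finset.sum_congr rfl fun i _ => ?_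
    rw [Finset.sum_eq_single i]
    · rw [heig i]; ring
    · intro k _ hk; rw [horth_a i k (Ne.symm hk)]; ring
    · intro h; exact absurd (Finset.mem_univ i) h
  have hle : ∀ i : Fin j, lam i ≤ lam idx := by
    intro i
    refine hlam ?_
    rw [Fin.le_def]
    have := i.isLt
    simp only [hidx]
    omega
  have hlamJ0 : 0 ≤ lam idx := by
    have hu : u idx ∈ Submodule.span ℝ (Set.range u) := Submodule.subset_span (Set.mem_range_self idx)
    have h1 := hA _ hu
    have h2 := hah_pos (Ih (u idx))
    have h3 := sq_nonneg (D (u idx))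
    rw [heig] at h1
    linarith
  -- auxiliary bounds for any coefficient vector c
  have haux : ∀ c : Fin j → ℝ,
      (D (S c)) ^ 2 ≤ a (S c) (S c) ∧
      a (S c) (S c) ≤ lam idx * ∑ i, (c i) ^ 2 ∧
      α * (∑ i, (c i) ^ 2) ≤ bh (Ih (S c)) (Ih (S c)) := by
    intro c
    have hv := hmem c
    have hD2a : (D (S c)) ^ 2 ≤ a (S c) (S c) := by
      have h1 := hA _ hv
      have h2 := hah_pos (Ih (S c))
      linarith
    have haB : a (S c) (S c) ≤ lam idx * ∑ i, (c i) ^ 2 := by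
      rw [ha_val, Finset.mul_sum]
      exact Finset.sum_le_sum fun i _ => mul_le_mul_of_nonneg_right (hle i) (sq_nonneg _)
    refine ⟨hD2a, haB, ?_⟩
    have hCc := hC _ hv
    rw [hb_val] at hCc
    have hBnn : (0:ℝ) ≤ ∑ i, (c i) ^ 2 :=
      Finset.sum_nonneg fun i _ => sq_nonneg (c i)
    have hD2 : (D (S c)) ^ 2 ≤ lam idx * ∑ i, (c i) ^ 2 := le_trans hD2a haB
    nlinarith [mul_le_mul_of_nonneg_left hD2 hβ.le,
      mul_nonneg (by linarith : (0:ℝ) ≤ 1 - β * lam idx - α) hBnn]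
  let T : (Fin j → ℝ) →ₗ[ℝ] Vh := Ih.comp S
  have hinj : Function.Injective T := by
    rw [← LinearMap.ker_eq_bot, LinearMap.ker_eq_bot']
    intro c hc
    by_contra hc0
    obtain ⟨i0, hi0⟩ := Function.ne_iff.mp hc0
    have hBpos : 0 < ∑ i, (c i) ^ 2 :=
      lt_of_lt_of_le
        (lt_of_le_of_ne (sq_nonneg _) (Ne.symm (pow_ne_zero 2 hi0)))
        (Finset.single_le_sum (fun i _ => sq_nonneg (c i)) (Finset.mem_univ i0))
    have hkey := (haux c).2.2
    have hTc : Ih (S c) = 0 := hc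
    rw [hTc] at hkey
    simp only [map_zero, LinearMap.zero_apply] at hkey
    nlinarith
  have hrank : Module.finrank ℝ (LinearMap.range T) = j := by
    rw [LinearMap.finrank_range_of_inj hinj, Module.finrank_fin_fun]
  obtain ⟨wh, hwh_mem, hwh_ne, hineq⟩ := hminmax _ hrank
  obtain ⟨c, rfl⟩ := LinearMap.mem_range.mp hwh_mem
  have hc0 : c ≠ 0 := by
    intro h; exact hwh_ne (by rw [h, map_zero])
  obtain ⟨i0, hi0⟩ := Function.ne_iff.mp hc0
  have hBpos : 0 < ∑ i, (c i) ^ 2 :=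
    lt_of_lt_of_le
      (lt_of_le_of_ne (sq_nonneg _) (Ne.symm (pow_ne_zero 2 hi0)))
      (Finset.single_le_sum (fun i _ => sq_nonneg (c i)) (Finset.mem_univ i0))
  have hv := hmem c
  have hAc := hA _ hv
  have hBc := hB _ hv
  have hCc := hC _ hv
  rw [hb_val] at hCc
  obtain ⟨hD2a, haB, -⟩ := haux c
  have hineq' : lamh * bh (Ih (S c)) (Ih (S c)) ≤
      ah (Ih (S c)) (Ih (S c)) + sh (Ih (S c)) (Ih (S c)) := hineq
  have hstep : lamh * ((∑ i, (c i) ^ 2) - β * (D (S c)) ^ 2) ≤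
      lamh * bh (Ih (S c)) (Ih (S c)) := mul_le_mul_of_nonneg_left hCc hlamh
  -- combine: lamh * B ≤ a + (lamh*β - (1-α)) * D^2
  have hmain : lamh * (∑ i, (c i) ^ 2) ≤
      a (S c) (S c) + (lamh * β - (1 - α)) * (D (S c)) ^ 2 := by
    nlinarith [hstep, hineq', hAc, hBc]
  by_contra hcon
  push_neg at hcon
  have hD2nn := sq_nonneg (D (S c))
  rcases le_or_gt (lamh * β - (1 - α)) 0 with ht | ht
  · nlinarith [mul_nonpos_of_nonpos_of_nonneg ht hD2nn,
      mul_pos (sub_pos.2 hcon) hBpos]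
  · have hD2 : (D (S c)) ^ 2 ≤ lam idx * ∑ i, (c i) ^ 2 := le_trans hD2a haB
    nlinarith [mul_le_mul_of_nonneg_left hD2 ht.le,
      mul_pos (sub_pos.2 hcon) hBpos,
      mul_nonneg hlamJ0 hBpos.le,
      mul_nonneg (mul_nonneg hβ.le hlamJ0) (mul_pos (sub_pos.2 hcon) hBpos).le]
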